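/- arXiv:2403.11754 — 6 statements merged into one kernel-verified Lean document; each statement's English description precedes it below -/
import Mathlib

section
/- For any two distinct sequences x, y in Σ_q^n and any read length ℓ ≥ 2, the Hamming distance between their ℓ-read vectors R_ℓ(x) and R_ℓ(y) is at least 2. -/
/-- A `q`-ary sequence of length `n`, represented as a function `ℤ → Fin q`
that vanishes outside the index range `[1, n]`. -/
def IsSeq (q n : ℕ) [NeZero q] (x : ℤ → Fin q) : Prop :=
  ∀ i : ℤ, (i < 1 ∨ (n : ℤ) < i) → x i = 0

/-- The `ℓ`-read vector of `x`, a vector of length `n + ℓ - 1` whose coordinate `j`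
(0-indexed, corresponding to the 1-indexed position `j + 1`) is the multiset
`{{x[j+1-ℓ+1], …, x[j+1]}}`. -/
def readFn (q n ℓ : ℕ) (x : ℤ → Fin q) : Fin (n + ℓ - 1) → Multiset (Fin q) :=
  fun j => (Multiset.range ℓ).map (fun k => x ((j : ℤ) + 1 - k))

theorem stmt0 (q n ℓ : ℕ) [NeZero q] (hℓ : 2 ≤ ℓ)
    (x y : ℤ → Fin q) (hx : IsSeq q n x) (hy : IsSeq q n y) (hxy : x ≠ y) :
    2 ≤ hammingDist (readFn q n ℓ x) (readFn q n ℓ y) := by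
  classical
  set T := (Finset.Icc (1:ℤ) (n:ℤ)).filter (fun i => x i ≠ y i) with hT
  have hmemT : ∀ i : ℤ, x i ≠ y i → i ∈ T := by
    intro i hi
    simp only [hT, Finset.mem_filter, Finset.mem_Icc]
    refine ⟨⟨?_, ?_⟩, hi⟩
    · by_contra h; push_neg at h
      exact hi ((hx i (Or.inl h)).trans (hy i (Or.inl h)).symm)
    · by_contra h; push_neg at h
      exact hi ((hx i (Or.inr h)).trans (hy i (Or.inr h)).symm)
  have hdiff : ∃ i, x i ≠ y i := by
    by_contra h; push_neg at h; exact hxy (funext h)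
  obtain ⟨i0, hi0⟩ := hdiff
  have hTne : T.Nonempty := ⟨i0, hmemT i0 hi0⟩
  set a := T.min' hTne with ha
  set b := T.max' hTne with hb
  have haT : a ∈ T := T.min'_mem hTne
  have hbT : b ∈ T := T.max'_mem hTne
  have haI : 1 ≤ a ∧ a ≤ (n:ℤ) ∧ x a ≠ y a := by
    have := haT; simp only [hT, Finset.mem_filter, Finset.mem_Icc] at this; tauto
  have hbI : 1 ≤ b ∧ b ≤ (n:ℤ) ∧ x b ≠ y b := by
    have := hbT; simp only [hT, Finset.mem_filter, Finset.mem_Icc] at this; tauto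
  have hab : a ≤ b := T.min'_le b hbT
  have hlta : ∀ p : ℤ, p < a → x p = y p := by
    intro p hp
    by_contra h
    exact absurd (T.min'_le p (hmemT p h)) (by omega)
  have hgtb : ∀ p : ℤ, b < p → x p = y p := by
    intro p hp
    by_contra h
    exact absurd (T.le_max' p (hmemT p h)) (by omega)
  have hn1 : 1 ≤ n := by
    have := haI.1; have := haI.2.1; omega
  -- indices
  have hA0 : (0:ℤ) ≤ a - 1 := by omega
  have hB0 : (0:ℤ) ≤ b - 1 := by omega
  set A := (a - 1).toNat with hAdef
  set B := (b - 1).toNat with hBdef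
  have hAval : (A : ℤ) = a - 1 := Int.toNat_of_nonneg hA0
  have hBval : (B : ℤ) = b - 1 := Int.toNat_of_nonneg hB0
  have hAn : A < n := by omega
  have hBn : B < n := by omega
  have h1 : A < n + ℓ - 1 := by omega
  have h2 : B + (ℓ - 1) < n + ℓ - 1 := by omega
  set j1 : Fin (n + ℓ - 1) := ⟨A, h1⟩ with hj1
  set j2 : Fin (n + ℓ - 1) := ⟨B + (ℓ - 1), h2⟩ with hj2
  have hread : ∀ (f : ℤ → Fin q) (j : Fin (n + ℓ - 1)),
      readFn q n ℓ f j = (Multiset.range ℓ).map (fun k : ℕ => f ((j : ℤ) + 1 - (k : ℤ))) := by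
    intro f j
    unfold readFn
    simp [Multiset.map_map, Function.comp]
  have hj1v : ((j1 : ℕ) : ℤ) = a - 1 := by rw [hj1]; exact hAval
  have hj2v : ((j2 : ℕ) : ℤ) = b - 1 + ((ℓ : ℤ) - 1) := by
    rw [hj2]
    show ((B + (ℓ - 1) : ℕ) : ℤ) = b - 1 + ((ℓ : ℤ) - 1)
    omega
  have hj1ne : readFn q n ℓ x j1 ≠ readFn q n ℓ y j1 := by
    rw [hread, hread]
    have hcoord : ∀ k : ℕ, ((j1 : ℤ) + 1 - (k : ℤ)) = a - k := fun k => by omega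
    have h0mem : (0 : ℕ) ∈ Multiset.range ℓ := by simp; omega
    rw [show (Multiset.range ℓ) = (0 : ℕ) ::ₘ (Multiset.range ℓ).erase 0 from
      (Multiset.cons_erase h0mem).symm]
    rw [Multiset.map_cons, Multiset.map_cons]
    have hrest : ((Multiset.range ℓ).erase 0).map (fun k : ℕ => x ((j1 : ℤ) + 1 - (k : ℤ))) =
        ((Multiset.range ℓ).erase 0).map (fun k : ℕ => y ((j1 : ℤ) + 1 - (k : ℤ))) := by
      apply Multiset.map_congr rfl
      intro k hk
      have hk' := (Multiset.nodup_range ℓ).mem_erase_iff.mp hk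
      rw [hcoord k]
      exact hlta _ (by have : 1 ≤ k := Nat.one_le_iff_ne_zero.mpr hk'.1; omega)
    rw [hrest, Ne, Multiset.cons_inj_left, hcoord 0]
    simpa using haI.2.2
  have hj2ne : readFn q n ℓ x j2 ≠ readFn q n ℓ y j2 := by
    rw [hread, hread]
    have hcoord : ∀ k : ℕ, ((j2 : ℤ) + 1 - (k : ℤ)) = b + ((ℓ : ℤ) - 1) - k := fun k => by omega
    have hlmem : (ℓ - 1 : ℕ) ∈ Multiset.range ℓ := by simp; omega
    rw [show (Multiset.range ℓ) = (ℓ - 1 : ℕ) ::ₘ (Multiset.range ℓ).erase (ℓ - 1) from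
      (Multiset.cons_erase hlmem).symm]
    rw [Multiset.map_cons, Multiset.map_cons]
    have hrest : ((Multiset.range ℓ).erase (ℓ - 1)).map (fun k : ℕ => x ((j2 : ℤ) + 1 - (k : ℤ))) =
        ((Multiset.range ℓ).erase (ℓ - 1)).map (fun k : ℕ => y ((j2 : ℤ) + 1 - (k : ℤ))) := by
      apply Multiset.map_congr rfl
      intro k hk
      have hk' := (Multiset.nodup_range ℓ).mem_erase_iff.mp hk
      have hkr : k < ℓ := by simpa using hk'.2
      rw [hcoord k]
      exact hgtb _ (by have h1 : k ≠ ℓ - 1 := hk'.1; omega)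
    rw [hrest, Ne, Multiset.cons_inj_left, hcoord (ℓ - 1)]
    have heq : (b : ℤ) + ((ℓ : ℤ) - 1) - ((ℓ - 1 : ℕ) : ℤ) = b := by omega
    rw [heq]
    exact hbI.2.2
  have hjj : j1 ≠ j2 := by
    intro h
    have := congrArg Fin.val h
    simp only [hj1, hj2] at this
    omega
  rw [hammingDist]
  refine Nat.succ_le_of_lt ?_
  rw [Finset.one_lt_card]
  exact ⟨j1, by simp [hj1ne], j2, by simp [hj2ne], hjj⟩
end

section
/- The mapping x ↦ R_ℓ(x) is injective on Σ_q^n; that is, two sequences x, y ∈ Σ_q^n with R_ℓ(x) = R_ℓ(y) must be equal. -/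
lemma aux_expand (q : ℕ) [NeZero q] (t : ℕ) (z : ℤ → Fin q) (c : ℤ) :
    Multiset.map (fun k : ℕ => z (c + 1 - (k : ℤ))) (Multiset.range (t + 1)) =
      z (c + 1) ::ₘ Multiset.map (fun k : ℕ => z (c - (k : ℤ))) (Multiset.range t) := by
  have h1 : Multiset.range (t + 1) =
      ((0 :: (List.range t).map (· + 1) : List ℕ) : Multiset ℕ) := by
    rw [← List.range_succ_eq_map]; rfl
  have h2 : Multiset.range t = ((List.range t : List ℕ) : Multiset ℕ) := rfl
  rw [h1, h2, Multiset.map_coe, Multiset.map_coe, List.map_cons, List.map_map,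
    ← Multiset.cons_coe]
  congr 1
  · norm_num
  · congr 1
    apply List.map_congr_left
    intro k _
    simp only [Function.comp]
    congr 1
    push_cast
    ring

theorem stmt2 (q n ℓ : ℕ) [NeZero q] (hℓ : 1 ≤ ℓ)
    (x y : ℤ → Fin q) (hx : IsSeq q n x) (hy : IsSeq q n y)
    (h : readFn q n ℓ x = readFn q n ℓ y) : x = y := by
  obtain ⟨t, rfl⟩ : ∃ t, ℓ = t + 1 := ⟨ℓ - 1, by omega⟩
  have main : ∀ m : ℕ, ∀ i : ℤ, i ≤ m → x i = y i := by
    intro m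
    induction m with
    | zero =>
      intro i hi
      rw [hx i (Or.inl (by omega)), hy i (Or.inl (by omega))]
    | succ m ih =>
      intro i hi
      rcases le_or_gt i m with hle | hgt
      · exact ih i hle
      have hi1 : i = (m : ℤ) + 1 := by omega
      rcases le_or_gt i 0 with h0 | h0
      · rw [hx i (Or.inl (by omega)), hy i (Or.inl (by omega))]
      rcases lt_or_ge (n : ℤ) i with hn | hn
      · rw [hx i (Or.inr hn), hy i (Or.inr hn)]
      -- now 1 ≤ i = m+1 ≤ n; use window j = m
      have hmlt : m < n + (t + 1) - 1 := by omega
      have hw := congrFun h ⟨m, hmlt⟩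
      simp only [readFn] at hw
      have hcoe : ((⟨m, hmlt⟩ : Fin (n + (t + 1) - 1)) : ℤ) = (m : ℤ) := rfl
      rw [hcoe] at hw
      have hbind : ∀ s : Multiset ℕ,
          (do let a ← s; pure ((a : ℤ))) = s.map (fun a : ℕ => (a : ℤ)) := by
        intro s
        exact Multiset.bind_singleton s _
      rw [hbind, Multiset.map_map, Multiset.map_map] at hw
      simp only [Function.comp] at hw
      rw [aux_expand q t x (m : ℤ), aux_expand q t y (m : ℤ)] at hw
      have hS : Multiset.map (fun k : ℕ => x ((m : ℤ) - (k : ℤ))) (Multiset.range t) =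
          Multiset.map (fun k : ℕ => y ((m : ℤ) - (k : ℤ))) (Multiset.range t) := by
        apply Multiset.map_congr rfl
        intro k _
        exact ih _ (by omega)
      rw [hS] at hw
      rw [hi1]
      exact (Multiset.cons_inj_left _).mp hw
  funext i
  rcases le_or_gt i 0 with h0 | h0
  · rw [hx i (Or.inl (by omega)), hy i (Or.inl (by omega))]
  · exact main i.toNat i (by omega)
end

section
/- Let x ≠ y ∈ Σ_q^n. The Hamming distance between the 2-read vectors of x and y is exactly two if and only if there exist sequences u, v over Σ_q (possibly empty), two distinct symbols a, b ∈ Σ_q, and an integer t ≥ 1, such that x = (u, α_t(ab), v) and y = (u, α_t(ba), v). -/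
set_option linter.unusedSectionVars false

def lget (q : ℕ) [NeZero q] (x : List (Fin q)) (j : ℤ) : Fin q :=
  if 0 ≤ j then x.getD j.toNat 0 else 0

def read2 (q n : ℕ) [NeZero q] (x : List (Fin q)) : Fin (n + 1) → Multiset (Fin q) :=
  fun k => {lget q x ((k : ℤ) - 1), lget q x (k : ℤ)}

def alt (q : ℕ) (a b : Fin q) : ℕ → List (Fin q)
  | 0 => []
  | t + 1 => a :: alt q b a t

variable {q : ℕ} [NeZero q]

lemma lget_neg (x : List (Fin q)) {j : ℤ} (h : j < 0) : lget q x j = 0 := by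
  simp [lget, not_le.mpr h]

lemma lget_nat (x : List (Fin q)) (m : ℕ) : lget q x (m : ℤ) = x.getD m 0 := by
  simp [lget]

lemma lget_of_le (x : List (Fin q)) {m : ℕ} (h : x.length ≤ m) : lget q x (m : ℤ) = 0 := by
  rw [lget_nat, List.getD_eq_default _ _ h]

lemma pair_eq_pair {a b c d : Fin q} :
    ({a, b} : Multiset (Fin q)) = {c, d} ↔ (a = c ∧ b = d) ∨ (a = d ∧ b = c) := by
  constructor
  · intro h
    have ha : a ∈ ({c, d} : Multiset (Fin q)) := h ▸ (by simp)
    simp only [Multiset.insert_eq_cons, Multiset.mem_cons, Multiset.mem_singleton] at ha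
    rcases ha with rfl | rfl
    · left
      refine ⟨rfl, ?_⟩
      have := (Multiset.cons_inj_right a).mp h
      simpa using this
    · right
      refine ⟨rfl, ?_⟩
      rw [Multiset.pair_comm c a] at h
      have := (Multiset.cons_inj_right a).mp h
      simpa using this
  · rintro (⟨rfl, rfl⟩ | ⟨rfl, rfl⟩)
    · rfl
    · exact Multiset.pair_comm a b

lemma pair_left_cancel {a b c : Fin q} :
    ({c, a} : Multiset (Fin q)) = {c, b} ↔ a = b := by
  rw [pair_eq_pair]; constructor
  · rintro (⟨-, rfl⟩ | ⟨rfl, rfl⟩) <;> rfl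
  · rintro rfl; left; exact ⟨rfl, rfl⟩

lemma pair_right_cancel {a b c : Fin q} :
    ({a, c} : Multiset (Fin q)) = {b, c} ↔ a = b := by
  rw [Multiset.pair_comm a c, Multiset.pair_comm b c]; exact pair_left_cancel

@[simp] lemma alt_length (a b : Fin q) (t : ℕ) : (alt q a b t).length = t := by
  induction t generalizing a b with
  | zero => rfl
  | succ t ih => simp [alt, ih]

lemma alt_getElem (a b : Fin q) (t : ℕ) (m : ℕ) (hm : m < t) :
    (alt q a b t)[m]'(by simpa using hm) = if Even m then a else b := by
  induction t generalizing a b m with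
  | zero => omega
  | succ t ih =>
    cases m with
    | zero => simp [alt]
    | succ m =>
      have hm' : m < t := by omega
      simp only [alt, List.getElem_cons_succ, ih b a m hm', Nat.even_add_one]
      by_cases h : Even m <;> simp [h]

lemma alt_getD (a b : Fin q) (t : ℕ) (m : ℕ) (hm : m < t) :
    (alt q a b t).getD m 0 = if Even m then a else b := by
  rw [List.getD_eq_getElem _ _ (by simpa using hm), alt_getElem a b t m hm]

lemma backward (n : ℕ) (u v : List (Fin q)) (a b : Fin q) (t : ℕ)
    (hab : a ≠ b) (ht : 1 ≤ t) (hn : u.length + t + v.length = n) :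
    hammingDist (read2 q n (u ++ alt q a b t ++ v)) (read2 q n (u ++ alt q b a t ++ v)) = 2 := by
  have hmid : ∀ (c d : Fin q) (m : ℕ), m < t →
      lget q (u ++ alt q c d t ++ v) ((u.length + m : ℕ) : ℤ) = if Even m then c else d := by
    intro c d m hm
    rw [lget_nat, List.append_assoc, List.getD_append_right _ _ _ _ (by omega),
      List.getD_append _ _ _ _ (by simp; omega)]
    simpa using alt_getD c d t m hm
  have hlo : ∀ jz : ℤ, jz < (u.length : ℤ) →
      lget q (u ++ alt q a b t ++ v) jz = lget q (u ++ alt q b a t ++ v) jz := by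
    intro jz hj
    rcases lt_or_ge jz 0 with h0 | h0
    · rw [lget_neg _ h0, lget_neg _ h0]
    · obtain ⟨m, rfl⟩ := Int.eq_ofNat_of_zero_le h0
      have hm : m < u.length := by exact_mod_cast hj
      rw [lget_nat, lget_nat, List.append_assoc, List.append_assoc,
        List.getD_append _ _ _ _ (by omega), List.getD_append _ _ _ _ (by omega)]
  have hhi : ∀ jz : ℤ, (u.length : ℤ) + t ≤ jz →
      lget q (u ++ alt q a b t ++ v) jz = lget q (u ++ alt q b a t ++ v) jz := by
    intro jz hj
    obtain ⟨m, rfl⟩ := Int.eq_ofNat_of_zero_le (by omega : (0:ℤ) ≤ jz)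
    have hm : u.length + t ≤ m := by exact_mod_cast hj
    rw [lget_nat, lget_nat,
      List.getD_append_right _ _ _ _ (by simp; omega),
      List.getD_append_right _ _ _ _ (by simp; omega)]
    simp
  have key : ∀ k : Fin (n + 1),
      read2 q n (u ++ alt q a b t ++ v) k ≠ read2 q n (u ++ alt q b a t ++ v) k ↔
        ((k : ℕ) = u.length ∨ (k : ℕ) = u.length + t) := by
    intro ⟨m, hmlt⟩
    simp only [read2, Fin.val_mk]
    rcases lt_trichotomy m u.length with h1 | h1 | h1
    · rw [hlo _ (by omega), hlo _ (by omega)]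
      constructor
      · intro h; exact absurd rfl h
      · rintro (h | h) <;> omega
    · have e1 : ((m : ℕ) : ℤ) = ((u.length + 0 : ℕ) : ℤ) := by omega
      rw [hlo ((m:ℤ) - 1) (by omega), e1, hmid a b 0 (by omega), hmid b a 0 (by omega)]
      simp only [Even.zero, if_pos]
      constructor
      · intro _; left; exact h1
      · intro _ h; exact hab (pair_left_cancel.mp h)
    · rcases lt_trichotomy m (u.length + t) with h2 | h2 | h2
      · obtain ⟨s, rfl⟩ : ∃ s, m = u.length + s + 1 := ⟨m - u.length - 1, by omega⟩
        have hs1 : s < t := by omega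
        have hs2 : s + 1 < t := by omega
        have c1 : ((u.length + s + 1 : ℕ) : ℤ) - 1 = ((u.length + s : ℕ) : ℤ) := by push_cast; ring
        have c2 : ((u.length + s + 1 : ℕ) : ℤ) = ((u.length + (s+1) : ℕ) : ℤ) := by push_cast; ring
        rw [c1, c2, hmid a b s hs1, hmid a b (s+1) hs2, hmid b a s hs1, hmid b a (s+1) hs2]
        constructor
        · intro hne
          exfalso
          apply hne
          rcases Nat.even_or_odd s with he | ho
          · simp only [he, Nat.even_add_one, if_pos, if_neg, not_true, if_false]
            simp [he]
            exact Multiset.cons_swap a b 0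
          · have he : ¬ Even s := Nat.not_even_iff_odd.mpr ho
            simp [he, Nat.even_add_one]
            exact Multiset.cons_swap b a 0
        · rintro (h | h) <;> omega
      · have c1 : ((m : ℕ) : ℤ) - 1 = ((u.length + (t-1) : ℕ) : ℤ) := by omega
        rw [c1, hmid a b (t-1) (by omega), hmid b a (t-1) (by omega), hhi (m:ℤ) (by omega)]
        constructor
        · intro _; right; exact h2
        · intro _ h
          have := pair_right_cancel.mp h
          by_cases he : Even (t-1)
          · simp [he] at this; exact hab this
          · simp [he] at this; exact hab this.symm
      · rw [hhi ((m:ℤ) - 1) (by omega), hhi (m:ℤ) (by omega)]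
        constructor
        · intro h; exact absurd rfl h
        · rintro (h | h) <;> omega
  have hL1 : u.length < n + 1 := by omega
  have hL2 : u.length + t < n + 1 := by omega
  unfold hammingDist
  have hset : (Finset.filter
        (fun i => read2 q n (u ++ alt q a b t ++ v) i ≠ read2 q n (u ++ alt q b a t ++ v) i)
        Finset.univ)
      = {⟨u.length, hL1⟩, ⟨u.length + t, hL2⟩} := by
    ext k
    simp only [Finset.mem_filter, Finset.mem_univ, true_and, Finset.mem_insert,
      Finset.mem_singleton, key k, Fin.ext_iff]
  rw [hset, Finset.card_pair (by simp [Fin.ext_iff]; omega)]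

lemma lget_getElem (x : List (Fin q)) (m : ℕ) (h : m < x.length) :
    lget q x (m : ℤ) = x[m] := by
  rw [lget_nat, List.getD_eq_getElem _ _ h]

lemma forward_main (n : ℕ) (x y : List (Fin q)) (hx : x.length = n) (hy : y.length = n)
    (i j : Fin (n + 1)) (hij : i < j)
    (hne : ∀ k, k ≠ i → k ≠ j → read2 q n x k = read2 q n y k)
    (hdi : read2 q n x i ≠ read2 q n y i)
    (hdj : read2 q n x j ≠ read2 q n y j) :
    ∃ (u v : List (Fin q)) (a b : Fin q) (t : ℕ),
      a ≠ b ∧ 1 ≤ t ∧ x = u ++ alt q a b t ++ v ∧ y = u ++ alt q b a t ++ v := by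
  have hijv : (i : ℕ) < (j : ℕ) := hij
  have hjn : (j : ℕ) ≤ n := by omega
  -- read equality at non-special coordinates, in pair form
  have reads : ∀ m : ℕ, m < n + 1 → m ≠ (i : ℕ) → m ≠ (j : ℕ) →
      ({lget q x ((m : ℤ) - 1), lget q x (m : ℤ)} : Multiset (Fin q)) =
        {lget q y ((m : ℤ) - 1), lget q y (m : ℤ)} := by
    intro m hm h1 h2
    have := hne ⟨m, hm⟩ (by simp [Fin.ext_iff, h1]) (by simp [Fin.ext_iff, h2])
    simpa [read2] using this
  -- prefix equality
  have A : ∀ m : ℕ, m < (i : ℕ) → lget q x (m : ℤ) = lget q y (m : ℤ) := by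
    intro m
    induction m with
    | zero =>
      intro hm
      have h := reads 0 (by omega) (by omega) (by omega)
      rw [show ((0:ℕ):ℤ) - 1 = (-1 : ℤ) by norm_num, lget_neg x (by norm_num),
        lget_neg y (by norm_num)] at h
      exact pair_left_cancel.mp h
    | succ m ih =>
      intro hm
      have h := reads (m+1) (by omega) (by omega) (by omega)
      rw [show ((m+1:ℕ):ℤ) - 1 = ((m:ℕ):ℤ) by push_cast; ring, ih (by omega)] at h
      exact pair_left_cancel.mp h
  -- suffix equality
  have B' : ∀ d m : ℕ, n ≤ m + d → (j : ℕ) ≤ m → lget q x (m : ℤ) = lget q y (m : ℤ) := by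
    intro d
    induction d with
    | zero =>
      intro m hm _
      rw [lget_of_le x (by omega), lget_of_le y (by omega)]
    | succ d ih =>
      intro m hm hjm
      rcases le_or_gt n m with h0 | h0
      · rw [lget_of_le x (by omega), lget_of_le y (by omega)]
      · have h := reads (m+1) (by omega) (by omega) (by omega)
        rw [show ((m+1:ℕ):ℤ) - 1 = ((m:ℕ):ℤ) by push_cast; ring,
          ih (m+1) (by omega) (by omega)] at h
        exact pair_right_cancel.mp h
  have B : ∀ m : ℕ, (j : ℕ) ≤ m → lget q x (m : ℤ) = lget q y (m : ℤ) :=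
    fun m hm => B' n m (by omega) hm
  -- the two symbols
  set a := lget q x ((i : ℕ) : ℤ) with ha
  set b := lget q y ((i : ℕ) : ℤ) with hb
  have efirst : lget q x (((i : ℕ) : ℤ) - 1) = lget q y (((i : ℕ) : ℤ) - 1) := by
    rcases Nat.eq_zero_or_pos (i : ℕ) with h0 | h0
    · rw [h0, show ((0:ℕ):ℤ) - 1 = (-1:ℤ) by norm_num, lget_neg x (by norm_num),
        lget_neg y (by norm_num)]
    · rw [show ((i:ℕ):ℤ) - 1 = (((i:ℕ)-1 : ℕ):ℤ) by omega]
      exact A _ (by omega)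
  have hdi' : ({lget q x (((i:ℕ):ℤ) - 1), lget q x ((i:ℕ):ℤ)} : Multiset (Fin q)) ≠
      {lget q y (((i:ℕ):ℤ) - 1), lget q y ((i:ℕ):ℤ)} := by
    simpa [read2] using hdi
  have hab : a ≠ b := fun h => hdi' (by rw [efirst]; exact pair_left_cancel.mpr h)
  -- middle alternation
  have P : ∀ m : ℕ, (i : ℕ) ≤ m → (m < (j : ℕ) →
      lget q x (m : ℤ) = (if Even (m - (i:ℕ)) then a else b) ∧
      lget q y (m : ℤ) = (if Even (m - (i:ℕ)) then b else a)) := by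
    intro m him
    induction m, him using Nat.le_induction with
    | base =>
      intro _
      simp [ha, hb]
    | succ m him ih =>
      intro hmj
      obtain ⟨ex, ey⟩ := ih (by omega)
      have hxyne : lget q x (m : ℤ) ≠ lget q y (m : ℤ) := by
        rw [ex, ey]
        by_cases h : Even (m - (i:ℕ)) <;> simp [h, hab, Ne.symm hab]
      have h := reads (m+1) (by omega) (by omega) (by omega)
      rw [show ((m+1:ℕ):ℤ) - 1 = ((m:ℕ):ℤ) by push_cast; ring] at h
      rcases pair_eq_pair.mp h with ⟨h1, _⟩ | ⟨h1, h2⟩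
      · exact absurd h1 hxyne
      · have hpar : m + 1 - (i:ℕ) = (m - (i:ℕ)) + 1 := by omega
        simp only [hpar, Nat.even_add_one]
        constructor
        · rw [h2, ey]
          by_cases hE : Even (m - (i:ℕ)) <;> simp [hE]
        · rw [← h1, ex]
          by_cases hE : Even (m - (i:ℕ)) <;> simp [hE]
  -- assemble lists
  set t := (j : ℕ) - (i : ℕ) with htdef
  have ht : 1 ≤ t := by omega
  have hitn : (i : ℕ) + t = (j : ℕ) := by omega
  have htle : t ≤ n - (i : ℕ) := by omega
  -- middle of x equals alt a b t
  have mid_x : (x.drop (i : ℕ)).take t = alt q a b t := by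
    apply List.ext_getElem
    · simp [hx]; omega
    · intro m h1 h2
      have hmt : m < t := by simpa using h2
      have hin : (i : ℕ) + m < x.length := by omega
      rw [List.getElem_take, List.getElem_drop, alt_getElem a b t m hmt,
        ← lget_getElem x ((i:ℕ) + m) hin]
      have := (P ((i:ℕ) + m) (by omega) (by omega)).1
      simpa using this
  have mid_y : (y.drop (i : ℕ)).take t = alt q b a t := by
    apply List.ext_getElem
    · simp [hy]; omega
    · intro m h1 h2
      have hmt : m < t := by simpa using h2
      have hin : (i : ℕ) + m < y.length := by omega
      rw [List.getElem_take, List.getElem_drop, alt_getElem b a t m hmt,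
        ← lget_getElem y ((i:ℕ) + m) hin]
      have := (P ((i:ℕ) + m) (by omega) (by omega)).2
      simpa using this
  have take_eq : y.take (i : ℕ) = x.take (i : ℕ) := by
    apply List.ext_getElem
    · simp [hx, hy]
    · intro m h1 h2
      have hmi : m < (i : ℕ) := by simp [hy] at h1; omega
      rw [List.getElem_take, List.getElem_take,
        ← lget_getElem y m (by omega), ← lget_getElem x m (by omega)]
      exact (A m hmi).symm
  have drop_eq : y.drop (j : ℕ) = x.drop (j : ℕ) := by
    apply List.ext_getElem
    · simp [hx, hy]
    · intro m h1 h2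
      have hmn : (j : ℕ) + m < n := by simp [hy] at h1; omega
      rw [List.getElem_drop, List.getElem_drop,
        ← lget_getElem y ((j:ℕ) + m) (by omega), ← lget_getElem x ((j:ℕ) + m) (by omega)]
      exact (B _ (by omega)).symm
  have decomp : ∀ z : List (Fin q), z.length = n →
      z = z.take (i : ℕ) ++ (z.drop (i : ℕ)).take t ++ z.drop (j : ℕ) := by
    intro z hz
    conv_lhs => rw [← List.take_append_drop (i : ℕ) z]
    rw [List.append_assoc]
    congr 1
    conv_lhs => rw [← List.take_append_drop t (z.drop (i : ℕ))]
    congr 1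
    rw [List.drop_drop, hitn]
  refine ⟨x.take (i : ℕ), x.drop (j : ℕ), a, b, t, hab, ht, ?_, ?_⟩
  · rw [← mid_x, List.append_assoc, ← List.append_assoc]
    exact decomp x hx
  · rw [← mid_y, ← take_eq, ← drop_eq, List.append_assoc, ← List.append_assoc]
    exact decomp y hy

theorem stmt3 (q n : ℕ) [NeZero q] (x y : List (Fin q))
    (hx : x.length = n) (hy : y.length = n) (hxy : x ≠ y) :
    hammingDist (read2 q n x) (read2 q n y) = 2 ↔
      ∃ (u v : List (Fin q)) (a b : Fin q) (t : ℕ),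
        a ≠ b ∧ 1 ≤ t ∧ x = u ++ alt q a b t ++ v ∧ y = u ++ alt q b a t ++ v := by
  constructor
  · intro h
    unfold hammingDist at h
    rw [Finset.card_eq_two] at h
    obtain ⟨i, j, hij, hset⟩ := h
    have hmem : ∀ k : Fin (n+1), (read2 q n x k ≠ read2 q n y k) ↔ (k = i ∨ k = j) := by
      intro k
      simpa using Finset.ext_iff.mp hset k
    rcases lt_or_gt_of_ne hij with hlt | hlt
    · exact forward_main n x y hx hy i j hlt
        (fun k h1 h2 => by
          by_contra hc
          rcases (hmem k).mp hc with rfl | rfl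
          exacts [h1 rfl, h2 rfl])
        ((hmem i).mpr (Or.inl rfl)) ((hmem j).mpr (Or.inr rfl))
    · exact forward_main n x y hx hy j i hlt
        (fun k h1 h2 => by
          by_contra hc
          rcases (hmem k).mp hc with rfl | rfl
          exacts [h2 rfl, h1 rfl])
        ((hmem j).mpr (Or.inr rfl)) ((hmem i).mpr (Or.inl rfl))
  · rintro ⟨u, v, a, b, t, hab, ht, rfl, rfl⟩
    have hn : u.length + t + v.length = n := by
      have := hx
      simp at this
      omega
    exact backward n u v a b t hab ht hn
end

section
/- Let x ≠ y ∈ Σ_q^n with d_H(R(x), R(y)) = d ≥ 2, where R denotes the 2-read vector. Then the indicator sequences satisfy 1 ≤ d_H(𝟙(x), 𝟙(y)) ≤ d. -/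
/-- The indicator sequence `𝟙(x)`: its `i`-th entry (1-indexed `i+1` for `i : Fin n`)
is `x[i+1] + x[i] mod q` (with `x[0] = 0`). -/
def indic (q n : ℕ) [NeZero q] (x : List (Fin q)) : Fin n → Fin q :=
  fun i => lget q x (i : ℤ) + lget q x ((i : ℤ) - 1)

/-! Since `𝟙(x)[i]` is the sum of the multiset `R(x)[i]`, every coordinate where the indicator
sequences differ is one where the read vectors differ; and `x` is recovered from `𝟙(x)` by
`x[i] = 𝟙(x)[i] - x[i-1]`, so distinct words have distinct indicator sequences. -/

theorem hammingDist_comp_le_of_injective {ι κ β : Type*} [Fintype ι] [Fintype κ]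
    [DecidableEq β] {e : ι → κ} (he : Function.Injective e) (x y : κ → β) :
    hammingDist (x ∘ e) (y ∘ e) ≤ hammingDist x y :=
  Finset.card_le_card_of_injOn e (fun i hi => by simpa using hi) he.injOn

section

variable {q : ℕ} [NeZero q]

theorem lget_neg_one (x : List (Fin q)) : lget q x (-1) = 0 := rfl

theorem lget_natCast (x : List (Fin q)) (m : ℕ) : lget q x m = x.getD m 0 := by
  simp [lget]

theorem lget_natCast_of_length_le {x : List (Fin q)} {m : ℕ} (hm : x.length ≤ m) :
    lget q x m = 0 := by
  rw [lget_natCast, List.getD_eq_default _ _ hm]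

theorem indic_eq_sum_read2 (n : ℕ) (x : List (Fin q)) (i : Fin n) :
    indic q n x i = (read2 q n x i.castSucc).sum := by
  simp [indic, read2, add_comm]

theorem hammingDist_indic_le_read2 (n : ℕ) (x y : List (Fin q)) :
    hammingDist (indic q n x) (indic q n y) ≤ hammingDist (read2 q n x) (read2 q n y) := by
  have hsum : ∀ z : List (Fin q),
      indic q n z = Multiset.sum ∘ (read2 q n z ∘ Fin.castSucc) :=
    fun z => funext (indic_eq_sum_read2 n z)
  rw [hsum x, hsum y]
  exact (hammingDist_comp_le_hammingDist fun _ => Multiset.sum).trans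
    (hammingDist_comp_le_of_injective (Fin.castSucc_injective n) _ _)

theorem indic_injective {n : ℕ} {x y : List (Fin q)} (hx : x.length = n) (hy : y.length = n)
    (h : indic q n x = indic q n y) : x = y := by
  have hget : ∀ m : ℕ, lget q x m = lget q y m := by
    intro m
    induction m with
    | zero =>
      rcases Nat.eq_zero_or_pos n with rfl | hn
      · rw [lget_natCast_of_length_le hx.le, lget_natCast_of_length_le hy.le]
      · simpa [indic, lget_neg_one] using congrFun h ⟨0, hn⟩
    | succ m ih =>
      by_cases hm : m + 1 < n
      · have hi := congrFun h ⟨m + 1, hm⟩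
        simp only [indic, Nat.cast_add, Nat.cast_one, add_sub_cancel_right, ih] at hi
        exact add_right_cancel hi
      · rw [lget_natCast_of_length_le (by omega), lget_natCast_of_length_le (by omega)]
  refine List.ext_getElem (hx.trans hy.symm) fun i hix hiy => ?_
  simpa [lget_natCast, List.getD_eq_getElem, hix, hiy] using hget i

end

theorem stmt5_general (q n d : ℕ) [NeZero q] (x y : List (Fin q))
    (hx : x.length = n) (hy : y.length = n) (hxy : x ≠ y)
    (hd : hammingDist (read2 q n x) (read2 q n y) = d) :
    1 ≤ hammingDist (indic q n x) (indic q n y) ∧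
      hammingDist (indic q n x) (indic q n y) ≤ d := by
  refine ⟨Nat.one_le_iff_ne_zero.mpr fun h0 => ?_, hd ▸ hammingDist_indic_le_read2 n x y⟩
  exact hxy (indic_injective hx hy (hammingDist_eq_zero.mp h0))

theorem stmt5 (q n d : ℕ) [NeZero q] (x y : List (Fin q))
    (hx : x.length = n) (hy : y.length = n) (hxy : x ≠ y) (hd2 : 2 ≤ d)
    (hd : hammingDist (read2 q n x) (read2 q n y) = d) :
    1 ≤ hammingDist (indic q n x) (indic q n y) ∧
      hammingDist (indic q n x) (indic q n y) ≤ d :=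
  stmt5_general q n d x y hx hy hxy hd
end

section
/- Let d ≥ 2, let P be a positive integer, let p be a prime with p ≥ max{P, q}, and let p_0 = (d-1)(q-1)+1. Suppose x, y ∈ Σ_q^n satisfy Σ_i x[i] ≡ Σ_i y[i] (mod p_0) and Σ_i i^k·x[i] ≡ Σ_i i^k·y[i] (mod p) for all k ∈ [1, d-2]. If x ≠ y, the positions where x and y differ are confined to an interval of length less than P (i.e., max differing index minus min differing index is < P), then the Hamming distance between x and y is at least d. -/
/-- The `k`-th order VT syndrome `VT^{(k)}(x) = Σ_{i=1}^n i^k x[i]` (as an integer),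
where the coordinate `i : Fin n` represents the 1-indexed position `i + 1`. -/
def vt (q k n : ℕ) (x : Fin n → Fin q) : ℤ :=
  ∑ i : Fin n, (((i : ℕ) : ℤ) + 1) ^ k * (((x i : ℕ)) : ℤ)

theorem stmt10 (q n d P p : ℕ) (hd : 2 ≤ d) (hP : 1 ≤ P) (hp : p.Prime)
    (hpmax : max P q ≤ p)
    (x y : Fin n → Fin q)
    (h0 : vt q 0 n x ≡ vt q 0 n y [ZMOD (((d : ℤ) - 1) * ((q : ℤ) - 1) + 1)])
    (hk : ∀ k ∈ Finset.Icc 1 (d - 2), vt q k n x ≡ vt q k n y [ZMOD (p : ℤ)])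
    (hne : x ≠ y)
    (hconf : ∀ i j : Fin n, x i ≠ y i → x j ≠ y j →
      (((i : ℕ) : ℤ) - ((j : ℕ) : ℤ)).natAbs < P) :
    d ≤ hammingDist x y := by
  classical
  by_contra hlt
  push_neg at hlt
  haveI : Fact p.Prime := ⟨hp⟩
  have hqp : q ≤ p := le_trans (le_max_right _ _) hpmax
  have hPp : P ≤ p := le_trans (le_max_left _ _) hpmax
  set z : Fin n → ℤ := fun i => ((x i : ℕ) : ℤ) - ((y i : ℕ) : ℤ) with hzdef
  set D : Finset (Fin n) := Finset.univ.filter (fun i => x i ≠ y i) with hDdef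
  have hDcard : D.card = hammingDist x y := rfl
  have hDne : D.Nonempty := by
    rcases Function.ne_iff.mp hne with ⟨i, hi⟩
    exact ⟨i, by simp [hDdef, hi]⟩
  obtain ⟨i0, hi0⟩ := hDne
  have hmemD : ∀ i : Fin n, i ∈ D ↔ x i ≠ y i := by
    intro i; simp [hDdef]
  have hq1 : 1 ≤ q := by have := (x i0).isLt; omega
  have hzabs : ∀ i, |z i| ≤ (q : ℤ) - 1 := by
    intro i
    have h1 : (x i : ℕ) ≤ q - 1 := by have := (x i).isLt; omega
    have h2 : (y i : ℕ) ≤ q - 1 := by have := (y i).isLt; omega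
    have h1' : ((x i : ℕ) : ℤ) ≤ (q : ℤ) - 1 := by
      have := Int.ofNat_le.mpr h1
      push_cast at this; omega
    have h2' : ((y i : ℕ) : ℤ) ≤ (q : ℤ) - 1 := by
      have := Int.ofNat_le.mpr h2
      push_cast at this; omega
    have h3 : (0:ℤ) ≤ ((x i : ℕ) : ℤ) := Int.ofNat_nonneg _
    have h4 : (0:ℤ) ≤ ((y i : ℕ) : ℤ) := Int.ofNat_nonneg _
    rw [abs_le]; constructor <;> simp [hzdef] <;> omega
  have hz0 : ∀ i ∈ Finset.univ \ D, ∀ k : ℕ, (((i : ℕ) : ℤ) + 1) ^ k * z i = 0 := by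
    intro i hi k
    have : x i = y i := by
      simp [hDdef] at hi
      exact hi
    simp [hzdef, this]
  -- the difference of syndromes
  have hvtdiff : ∀ k : ℕ, vt q k n x - vt q k n y = ∑ i ∈ D, (((i : ℕ) : ℤ) + 1) ^ k * z i := by
    intro k
    have : vt q k n x - vt q k n y = ∑ i : Fin n, (((i : ℕ) : ℤ) + 1) ^ k * z i := by
      simp [vt, hzdef, ← Finset.sum_sub_distrib, mul_sub]
    rw [this]
    exact (Finset.sum_subset (Finset.subset_univ D) (fun i hi h => hz0 i (by simp [hi, h]) k)).symm
  have hcard : (D.card : ℤ) ≤ (d : ℤ) - 1 := by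
    have : D.card < d := by rw [hDcard]; exact hlt
    omega
  -- Step A : the zeroth sums are exactly equal
  have hS0 : ∑ i ∈ D, z i = 0 := by
    have hdvd : (((d:ℤ) - 1) * ((q:ℤ) - 1) + 1) ∣ (∑ i ∈ D, z i) := by
      have := (h0.symm).dvd
      have h0' : vt q 0 n x - vt q 0 n y = ∑ i ∈ D, z i := by
        rw [hvtdiff 0]; simp
      rwa [h0'] at this
    refine Int.eq_zero_of_abs_lt_dvd hdvd ?_
    calc |∑ i ∈ D, z i| ≤ ∑ i ∈ D, |z i| := Finset.abs_sum_le_sum_abs _ _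
      _ ≤ ∑ _i ∈ D, ((q:ℤ) - 1) := Finset.sum_le_sum (fun i _ => hzabs i)
      _ = (D.card : ℤ) * ((q:ℤ) - 1) := by rw [Finset.sum_const]; ring
      _ ≤ ((d:ℤ) - 1) * ((q:ℤ) - 1) := by
          have hq' : (0:ℤ) ≤ (q:ℤ) - 1 := by exact_mod_cast by omega
          exact mul_le_mul_of_nonneg_right hcard hq'
      _ < ((d:ℤ) - 1) * ((q:ℤ) - 1) + 1 := by omega
  -- Step B : divisibility for all k ≤ d - 2
  have hSk : ∀ k ≤ d - 2, (p : ℤ) ∣ ∑ i ∈ D, (((i : ℕ) : ℤ) + 1) ^ k * z i := by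
    intro k hkle
    rcases Nat.eq_zero_or_pos k with rfl | hkpos
    · simp only [pow_zero, one_mul]
      rw [hS0]
      exact dvd_zero _
    · have hmem : k ∈ Finset.Icc 1 (d - 2) := Finset.mem_Icc.mpr ⟨hkpos, hkle⟩
      have := ((hk k hmem).symm).dvd
      rwa [hvtdiff k] at this
  -- move to ZMod p
  set w : Fin n → ZMod p := fun i => ((((i : ℕ) : ℤ) + 1 : ℤ) : ZMod p) with hwdef
  set f : Fin n → ZMod p := fun i => ((z i : ℤ) : ZMod p) with hfdef
  have hfk : ∀ k ≤ d - 2, ∑ i ∈ D, (w i) ^ k * f i = 0 := by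
    intro k hkle
    have := (ZMod.intCast_zmod_eq_zero_iff_dvd _ p).mpr (hSk k hkle)
    rw [← this]
    simp only [hwdef, hfdef]
    push_cast
    rfl
  have hwinj : Set.InjOn w (D : Set (Fin n)) := by
    intro i hi j hj hij
    have hxi : x i ≠ y i := (hmemD i).mp (by exact_mod_cast hi)
    have hxj : x j ≠ y j := (hmemD j).mp (by exact_mod_cast hj)
    have hdist : (((i : ℕ) : ℤ) - ((j : ℕ) : ℤ)).natAbs < P := hconf i j hxi hxj
    have hzero : ((((i : ℕ) : ℤ) - ((j : ℕ) : ℤ) : ℤ) : ZMod p) = 0 := by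
      have : w i - w j = ((((i : ℕ) : ℤ) - ((j : ℕ) : ℤ) : ℤ) : ZMod p) := by
        simp only [hwdef]; push_cast; ring
      rw [← this, hij, sub_self]
    have hdvd : (p : ℤ) ∣ (((i : ℕ) : ℤ) - ((j : ℕ) : ℤ)) :=
      (ZMod.intCast_zmod_eq_zero_iff_dvd _ p).mp hzero
    have : (((i : ℕ) : ℤ) - ((j : ℕ) : ℤ)) = 0 := by
      refine Int.eq_zero_of_abs_lt_dvd hdvd ?_
      rw [Int.abs_eq_natAbs]
      exact_mod_cast lt_of_lt_of_le hdist hPp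
    have : (i : ℕ) = (j : ℕ) := by omega
    exact Fin.ext this
  -- polynomial version
  have hpoly : ∀ g : Polynomial (ZMod p), g.natDegree ≤ d - 2 →
      ∑ i ∈ D, g.eval (w i) * f i = 0 := by
    intro g hg
    have heval : ∀ t : ZMod p, g.eval t =
        ∑ k ∈ Finset.range (g.natDegree + 1), g.coeff k * t ^ k := by
      intro t; exact Polynomial.eval_eq_sum_range (p := g) t
    calc ∑ i ∈ D, g.eval (w i) * f i
        = ∑ i ∈ D, ∑ k ∈ Finset.range (g.natDegree + 1), g.coeff k * ((w i) ^ k * f i) := by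
          refine Finset.sum_congr rfl fun i _ => ?_
          rw [heval (w i), Finset.sum_mul]
          refine Finset.sum_congr rfl fun k _ => by ring
      _ = ∑ k ∈ Finset.range (g.natDegree + 1), g.coeff k * (∑ i ∈ D, (w i) ^ k * f i) := by
          rw [Finset.sum_comm]
          refine Finset.sum_congr rfl fun k _ => ?_
          rw [Finset.mul_sum]
      _ = 0 := by
          refine Finset.sum_eq_zero fun k hkmem => ?_
          have : k ≤ d - 2 := by
            have := Finset.mem_range.mp hkmem
            omega
          rw [hfk k this, mul_zero]
  -- apply to the Lagrange basis polynomial at i0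
  have hdeg : (Lagrange.basis D w i0).natDegree ≤ d - 2 := by
    rw [Lagrange.natDegree_basis hwinj hi0]
    have : D.card < d := by rw [hDcard]; exact hlt
    omega
  have hfi0 : f i0 = 0 := by
    have := hpoly (Lagrange.basis D w i0) hdeg
    rw [← this]
    rw [← Finset.add_sum_erase _ _ hi0]
    rw [Lagrange.eval_basis_self hwinj hi0, one_mul]
    have : ∑ i ∈ D.erase i0, (Lagrange.basis D w i0).eval (w i) * f i = 0 := by
      refine Finset.sum_eq_zero fun j hj => ?_
      rcases Finset.mem_erase.mp hj with ⟨hji0, hjD⟩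
      rw [Lagrange.eval_basis_of_ne (Ne.symm hji0) hjD, zero_mul]
    rw [this, add_zero]
  -- contradiction
  have hdvdz : (p : ℤ) ∣ z i0 := (ZMod.intCast_zmod_eq_zero_iff_dvd _ p).mp hfi0
  have hzi0 : z i0 = 0 := by
    refine Int.eq_zero_of_abs_lt_dvd hdvdz ?_
    have := hzabs i0
    have : |z i0| ≤ (q:ℤ) - 1 := this
    have hq : (q:ℤ) ≤ (p:ℤ) := by exact_mod_cast hqp
    omega
  have : x i0 = y i0 := by
    have : ((x i0 : ℕ) : ℤ) = ((y i0 : ℕ) : ℤ) := by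
      have := hzi0; simp [hzdef] at this; omega
    have : (x i0 : ℕ) = (y i0 : ℕ) := by exact_mod_cast this
    exact Fin.ext this
  exact (hmemD i0).mp hi0 this
end

section
/- Let P be an integer and let x, y ∈ Σ_2^n be distinct binary sequences with Σ_i x[i] ≡ Σ_i y[i] (mod 3) and Σ_i i·x[i] ≡ Σ_i i·y[i] (mod P). If the distance between the smallest and largest indices where x and y differ is less than P, then d_H(x, y) ≥ 3. -/
theorem stmt11 (n P : ℕ) (x y : Fin n → Fin 2)
    (h0 : vt 2 0 n x ≡ vt 2 0 n y [ZMOD (3 : ℤ)])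
    (h1 : vt 2 1 n x ≡ vt 2 1 n y [ZMOD (P : ℤ)])
    (hne : x ≠ y)
    (hconf : ∀ i j : Fin n, x i ≠ y i → x j ≠ y j →
      (((i : ℕ) : ℤ) - ((j : ℕ) : ℤ)).natAbs < P) :
    3 ≤ hammingDist x y := by
  classical
  by_contra hlt
  push_neg at hlt
  set S : Finset (Fin n) := Finset.univ.filter (fun i => x i ≠ y i) with hSdef
  have hcard : hammingDist x y = S.card := rfl
  have hd0 : (3:ℤ) ∣ vt 2 0 n y - vt 2 0 n x := h0.dvd
  have hd1 : (P:ℤ) ∣ vt 2 1 n y - vt 2 1 n x := h1.dvd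
  have key : ∀ k, vt 2 k n y - vt 2 k n x
      = ∑ i ∈ S, (((i:ℕ):ℤ)+1)^k * ((y i : ℤ) - (x i : ℤ)) := by
    intro k
    rw [vt, vt, ← Finset.sum_sub_distrib]
    have hz : ∀ i ∈ Finset.univ, i ∉ S →
        ((((i:ℕ):ℤ)+1)^k * (y i : ℤ) - (((i:ℕ):ℤ)+1)^k * (x i : ℤ)) = 0 := by
      intro i _ hiS
      have : x i = y i := by
        by_contra hxy
        exact hiS (Finset.mem_filter.mpr ⟨Finset.mem_univ i, hxy⟩)
      rw [this]; ring
    rw [← Finset.sum_subset (Finset.filter_subset _ Finset.univ) hz]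
    exact Finset.sum_congr rfl (fun i _ => by ring)
  have hεval : ∀ i ∈ S, ((y i : ℤ) - (x i : ℤ)) = 1 ∨ ((y i : ℤ) - (x i : ℤ)) = -1 := by
    intro i hi
    have hxy : x i ≠ y i := (Finset.mem_filter.mp hi).2
    have h1 : (x i : ℕ) < 2 := (x i).isLt
    have h2 : (y i : ℕ) < 2 := (y i).isLt
    have h3 : (x i : ℕ) ≠ (y i : ℕ) := fun h => hxy (Fin.ext h)
    omega
  have hScard1 : 1 ≤ S.card := by
    rcases Function.ne_iff.mp hne with ⟨i, hi⟩
    exact Finset.card_pos.mpr ⟨i, Finset.mem_filter.mpr ⟨Finset.mem_univ i, hi⟩⟩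
  rw [hcard] at hlt
  interval_cases h : S.card
  · -- card = 1
    obtain ⟨a, ha⟩ := Finset.card_eq_one.mp h
    have haS : a ∈ S := ha ▸ Finset.mem_singleton_self a
    have k0 := key 0
    rw [ha, Finset.sum_singleton] at k0
    rw [k0] at hd0
    rcases hεval a haS with hε | hε <;> simp [hε] at hd0 <;> omega
  · -- card = 2
    obtain ⟨a, b, hab, hS⟩ := Finset.card_eq_two.mp h
    have haS : a ∈ S := hS ▸ Finset.mem_insert_self a {b}
    have hbS : b ∈ S := hS ▸ Finset.mem_insert_of_mem (Finset.mem_singleton_self b)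
    have k0 := key 0
    have k1 := key 1
    rw [hS, Finset.sum_pair hab] at k0 k1
    rw [k0] at hd0
    rw [k1] at hd1
    simp only [pow_zero, one_mul, pow_one] at hd0 hd1
    have hεab : ((y b : ℤ) - (x b : ℤ)) = -((y a : ℤ) - (x a : ℤ)) := by
      rcases hεval a haS with hεa | hεa <;> rcases hεval b hbS with hεb | hεb <;>
        rw [hεa, hεb] at hd0 ⊢ <;> omega
    rw [hεab] at hd1
    have hd1' : (P:ℤ) ∣ ((y a : ℤ) - (x a : ℤ)) * (((a:ℕ):ℤ) - ((b:ℕ):ℤ)) := by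
      convert hd1 using 1; ring
    have hPdvd : (P:ℤ) ∣ (((a:ℕ):ℤ) - ((b:ℕ):ℤ)) := by
      rcases hεval a haS with hεa | hεa <;> rw [hεa] at hd1'
      · simpa using hd1'
      · rw [neg_one_mul] at hd1'
        exact dvd_neg.mp hd1'
    have hlt' := hconf a b (Finset.mem_filter.mp haS).2 (Finset.mem_filter.mp hbS).2
    have : (((a:ℕ):ℤ) - ((b:ℕ):ℤ)) = 0 := by
      have := Int.natAbs_dvd_natAbs.mpr hPdvd
      simp only [Int.natAbs_natCast] at this
      have := Nat.eq_zero_of_dvd_of_lt this hlt'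
      omega
    exact hab (Fin.ext (by omega))
end
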